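/- For w ∈ [1/2, 1/1.84], the function 2^{1/3}(1−w)^{2/3} + w^{2/3} + 1 is at least 2.02676 · 2^{−4/3} · 3. -/

import Mathlib

/-!
Both `x ↦ x ^ (2/3)` and `x ↦ (1 - x) ^ (2/3)` are concave, so the left-hand side is concave in `w`
and attains its minimum over `[1/2, 25/46]` at an endpoint. At the endpoints, rational lower bounds
on the cube roots (`a ≤ x ^ (m/n)` as soon as `a ^ n ≤ x ^ m`) give the inequality; at `w = 25/46`
the margin is only about `4 · 10⁻⁶`, so these bounds are taken to six decimals.
-/

open Set

theorem Real.le_rpow_div_of_pow_le {a x : ℝ} {m n : ℕ} (ha : 0 ≤ a) (hx : 0 ≤ x) (hn : n ≠ 0)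
    (h : a ^ n ≤ x ^ m) : a ≤ x ^ ((m : ℝ) / n) := by
  rw [div_eq_mul_inv, Real.rpow_mul hx, Real.rpow_natCast,
    Real.le_rpow_inv_iff_of_pos ha (by positivity) (by positivity), Real.rpow_natCast]
  exact h

theorem Real.concaveOn_one_sub_rpow {p : ℝ} (hp₀ : 0 ≤ p) (hp₁ : p ≤ 1) :
    ConcaveOn ℝ (Iic 1) fun x : ℝ ↦ (1 - x) ^ p := by
  refine ⟨convex_Iic 1, fun x hx y hy a b ha hb hab => ?_⟩
  convert (Real.concaveOn_rpow hp₀ hp₁).2 (mem_Ici.2 (sub_nonneg.2 hx))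
    (mem_Ici.2 (sub_nonneg.2 hy)) ha hb hab using 2
  simp only [smul_eq_mul]
  linear_combination (-1 : ℝ) * hab

theorem concaveOn_mul_one_sub_rpow_add_rpow_add {p c : ℝ} (hp₀ : 0 ≤ p) (hp₁ : p ≤ 1)
    (hc : 0 ≤ c) (d : ℝ) : ConcaveOn ℝ (Icc 0 1) fun x : ℝ ↦ c * (1 - x) ^ p + x ^ p + d :=
  ((((Real.concaveOn_one_sub_rpow hp₀ hp₁).subset Icc_subset_Iic_self (convex_Icc 0 1)).smul
    hc).add ((Real.concaveOn_rpow hp₀ hp₁).subset Icc_subset_Ici_self (convex_Icc 0 1))).add_const d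

theorem rhs_le : (2.02676 : ℝ) * 2 ^ (-(4 : ℝ) / 3) * 3 ≤ 2.412961 := by
  have h : (2.519842 : ℝ) ≤ 2 ^ ((4 : ℝ) / 3) := by
    exact_mod_cast Real.le_rpow_div_of_pow_le (m := 4) (n := 3) (by norm_num) (by norm_num)
      three_ne_zero (by norm_num)
  rw [neg_div, Real.rpow_neg zero_le_two]
  have := inv_anti₀ (by norm_num) h
  linarith

theorem le_lhs_at_half :
    (2.412961 : ℝ) ≤
      2 ^ ((1 : ℝ) / 3) * (1 - 1 / 2) ^ ((2 : ℝ) / 3) + (1 / 2) ^ ((2 : ℝ) / 3) + 1 := by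
  have h₁ : (1.2599 : ℝ) ≤ 2 ^ ((1 : ℝ) / 3) := by
    exact_mod_cast Real.le_rpow_div_of_pow_le (m := 1) (n := 3) (by norm_num) (by norm_num)
      three_ne_zero (by norm_num)
  have h₂ : (0.6299 : ℝ) ≤ (1 - 1 / 2) ^ ((2 : ℝ) / 3) := by
    exact_mod_cast Real.le_rpow_div_of_pow_le (m := 2) (n := 3) (by norm_num) (by norm_num)
      three_ne_zero (by norm_num)
  have h₃ : (0.6299 : ℝ) ≤ (1 / 2) ^ ((2 : ℝ) / 3) := by
    exact_mod_cast Real.le_rpow_div_of_pow_le (m := 2) (n := 3) (by norm_num) (by norm_num)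
      three_ne_zero (by norm_num)
  nlinarith [mul_le_mul h₁ h₂ (by norm_num) (by positivity)]

theorem le_lhs_at_25_div_46 :
    (2.412961 : ℝ) ≤
      2 ^ ((1 : ℝ) / 3) * (1 - 25 / 46) ^ ((2 : ℝ) / 3) + (25 / 46) ^ ((2 : ℝ) / 3) + 1 := by
  have h₁ : (1.259921 : ℝ) ≤ 2 ^ ((1 : ℝ) / 3) := by
    exact_mod_cast Real.le_rpow_div_of_pow_le (m := 1) (n := 3) (by norm_num) (by norm_num)
      three_ne_zero (by norm_num)
  have h₂ : (0.592890 : ℝ) ≤ (1 - 25 / 46) ^ ((2 : ℝ) / 3) := by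
    exact_mod_cast Real.le_rpow_div_of_pow_le (m := 2) (n := 3) (by norm_num) (by norm_num)
      three_ne_zero (by norm_num)
  have h₃ : (0.665970 : ℝ) ≤ (25 / 46) ^ ((2 : ℝ) / 3) := by
    exact_mod_cast Real.le_rpow_div_of_pow_le (m := 2) (n := 3) (by norm_num) (by norm_num)
      three_ne_zero (by norm_num)
  nlinarith [mul_le_mul h₁ h₂ (by norm_num) (by positivity)]

/-- For `w ∈ [1/2, 1/1.84]`,
`2^{1/3}(1−w)^{2/3} + w^{2/3} + 1 ≥ 2.02676 · 2^{−4/3} · 3`. -/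
theorem scale_invariant_inequality (w : ℝ) (h1 : 1 / 2 ≤ w) (h2 : w ≤ 1 / 1.84) :
    (2 : ℝ) ^ ((1 : ℝ) / 3) * (1 - w) ^ ((2 : ℝ) / 3) + w ^ ((2 : ℝ) / 3) + 1 ≥
      2.02676 * 2 ^ (-(4 : ℝ) / 3) * 3 := by
  have hw : w ∈ Icc (1 / 2 : ℝ) (25 / 46) := ⟨h1, by norm_num at h2; linarith⟩
  have hconcave := concaveOn_mul_one_sub_rpow_add_rpow_add (p := 2 / 3) (c := 2 ^ ((1 : ℝ) / 3))
    (by norm_num) (by norm_num) (by positivity) 1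
  have hmin := hconcave.min_le_of_mem_Icc ⟨by norm_num, by norm_num⟩ ⟨by norm_num, by norm_num⟩ hw
  exact rhs_le.trans ((le_min le_lhs_at_half le_lhs_at_25_div_46).trans hmin)
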